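/- Let v_1, …, v_d ∈ ℕ^n (nonnegative integer vectors) be linearly independent over ℚ. In the ring of multivariate formal power series in n variables over ℚ, let φ be the power series whose coefficient of X^w is 1 if w ∈ ℤ^n ∩ cone_ℝ(v_1,…,v_d) and 0 otherwise. Then (1 − X^{v_1})·…·(1 − X^{v_d}) · φ = Σ_{w ∈ ℤ^n ∩ Π(v_1,…,v_d)} X^w. -/

import Mathlib

/-!
Multiplying the indicator series of a set `A` of lattice points by `1 - X^e` gives the indicator
series of `A \ (e + A)` whenever `e + A ⊆ A`. By linear independence every point of the cone has
unique coordinates `λ`; so if `C` is the set of cone points with `λ i < 1` for `i ∈ s` and `k ∉ s`,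
then `C \ (v k + C)` consists of the points of `C` with `λ k < 1`. Multiplying by the factors
`1 - X^{v k}` one at a time thus truncates the cone to the half-open parallelepiped.
-/

/-- The indicator multivariate formal power series of a set of exponent vectors:
`Σ_{w ∈ S} X^w`. -/
noncomputable def indicatorSeries (n : ℕ) (S : Set (Fin n →₀ ℕ)) :
    MvPowerSeries (Fin n) ℚ :=
  fun w => S.indicator 1 w

/-- The real cone generated by the vectors `v i`. -/
def coneR {n d : ℕ} (v : Fin d → (Fin n → ℕ)) : Set (Fin n → ℝ) :=
  {y | ∃ lam : Fin d → ℝ, (∀ i, 0 ≤ lam i) ∧ y = ∑ i, lam i • (fun j => (v i j : ℝ))}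

/-- The (half-open) fundamental parallelepiped of the vectors `v i`. -/
def fundPar {n d : ℕ} (v : Fin d → (Fin n → ℕ)) : Set (Fin n → ℝ) :=
  {y | ∃ lam : Fin d → ℝ, (∀ i, 0 ≤ lam i ∧ lam i < 1) ∧ y = ∑ i, lam i • (fun j => (v i j : ℝ))}

open Finset MvPowerSeries
open scoped Pointwise

section TruncatedCone

variable {ι M : Type*} [Fintype ι] [DecidableEq ι] [AddCommGroup M] [Module ℝ M] (u : ι → M)

def truncatedCone (s : Finset ι) : Set M :=
  {y | ∃ lam : ι → ℝ, (∀ i, 0 ≤ lam i ∧ (i ∈ s → lam i < 1)) ∧ y = ∑ i, lam i • u i}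

lemma sum_add_single_smul (lam : ι → ℝ) (k : ι) (c : ℝ) :
    ∑ i, (lam + Pi.single k c : ι → ℝ) i • u i = ∑ i, lam i • u i + c • u k := by
  simp [add_smul, Finset.sum_add_distrib, Pi.single_apply, ite_smul]

variable {u}

lemma add_mem_truncatedCone {s : Finset ι} {k : ι} (hk : k ∉ s) {y : M}
    (hy : y ∈ truncatedCone u s) : y + u k ∈ truncatedCone u s := by
  obtain ⟨lam, hlam, rfl⟩ := hy
  refine ⟨lam + Pi.single k 1, fun i => ⟨?_, fun hi => ?_⟩, by rw [sum_add_single_smul, one_smul]⟩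
  · exact add_nonneg (hlam i).1 (by rw [Pi.single_apply]; positivity)
  · simpa [ne_of_mem_of_not_mem hi hk] using (hlam i).2 hi

lemma truncatedCone_insert (hu : LinearIndependent ℝ u) {s : Finset ι} {k : ι} (hk : k ∉ s) :
    truncatedCone u (insert k s) = {y | y ∈ truncatedCone u s ∧ y - u k ∉ truncatedCone u s} := by
  ext y
  constructor
  · rintro ⟨lam, hlam, rfl⟩
    refine ⟨⟨lam, fun i => ⟨(hlam i).1, fun hi => (hlam i).2 (mem_insert_of_mem hi)⟩, rfl⟩, ?_⟩
    rintro ⟨mu, hmu, hsub⟩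
    have hcoord := hu.eq_coords_of_eq (f := lam) (g := mu + Pi.single k 1)
      (by rw [sum_add_single_smul, one_smul, ← hsub, sub_add_cancel]) k
    simp only [Pi.add_apply, Pi.single_eq_same] at hcoord
    linarith [(hmu k).1, (hlam k).2 (mem_insert_self k s)]
  · rintro ⟨⟨lam, hlam, rfl⟩, hsub⟩
    refine ⟨lam, fun i => ⟨(hlam i).1, fun hi => ?_⟩, rfl⟩
    rcases mem_insert.mp hi with rfl | hi
    · by_contra! hge
      refine hsub ⟨lam + Pi.single i (-1), fun j => ⟨?_, fun hj => ?_⟩, ?_⟩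
      · rcases eq_or_ne j i with rfl | hji
        · simpa using hge
        · simpa [hji] using (hlam j).1
      · simpa [ne_of_mem_of_not_mem hj hk] using (hlam j).2 hj
      · rw [sum_add_single_smul, neg_one_smul, sub_eq_add_neg]
    · exact (hlam i).2 hi

omit [DecidableEq ι] in
lemma truncatedCone_subset_nonneg [PartialOrder M] [PosSMulMono ℝ M] [IsOrderedAddMonoid M]
    (hu : ∀ i, 0 ≤ u i) (s : Finset ι) : truncatedCone u s ⊆ {y | 0 ≤ y} := by
  rintro _ ⟨lam, hlam, rfl⟩
  exact sum_nonneg fun i _ => smul_nonneg (hlam i).1 (hu i)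

end TruncatedCone

section LatticePoints

variable {σ : Type*}

lemma vadd_setOf_natCast_mem {C : Set (σ → ℝ)} (hC : C ⊆ {y | 0 ≤ y}) (e : σ →₀ ℕ) :
    e +ᵥ {w : σ →₀ ℕ | (fun j => (w j : ℝ)) ∈ C} =
      {w | (fun j => (w j : ℝ)) - (fun j => (e j : ℝ)) ∈ C} := by
  ext w
  simp only [Set.mem_vadd_set, Set.mem_ofPred_eq, vadd_eq_add]
  constructor
  · rintro ⟨x, hx, rfl⟩
    convert hx using 1
    ext j
    simp
  · intro hw
    have hle : e ≤ w := fun j => by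
      have := hC hw j
      simp only [Pi.zero_apply, Pi.sub_apply, sub_nonneg] at this
      exact_mod_cast this
    refine ⟨w - e, ?_, add_tsub_cancel_of_le hle⟩
    convert hw using 1
    ext j
    simp [Nat.cast_sub (hle j)]

end LatticePoints

section IndicatorSeries

variable {n : ℕ}

lemma coeff_indicatorSeries (S : Set (Fin n →₀ ℕ)) (w : Fin n →₀ ℕ) :
    coeff w (indicatorSeries n S) = S.indicator 1 w :=
  rfl

lemma monomial_one_mul_indicatorSeries (e : Fin n →₀ ℕ) (S : Set (Fin n →₀ ℕ)) :
    monomial e 1 * indicatorSeries n S = indicatorSeries n (e +ᵥ S) := by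
  classical
  ext w
  rw [coeff_monomial_mul, one_mul]
  simp only [coeff_indicatorSeries, Set.indicator_apply, Set.mem_vadd_set, vadd_eq_add,
    Pi.one_apply]
  by_cases hle : e ≤ w
  · have : (∃ x ∈ S, e + x = w) ↔ w - e ∈ S :=
      ⟨fun ⟨x, hx, hxw⟩ => by rwa [← hxw, add_tsub_cancel_left],
        fun h => ⟨w - e, h, add_tsub_cancel_of_le hle⟩⟩
    simp [hle, this]
  · have : ¬ ∃ x ∈ S, e + x = w := fun ⟨x, _, hxw⟩ => hle (hxw ▸ le_self_add)
    simp [hle, this]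

lemma one_sub_monomial_mul_indicatorSeries {e : Fin n →₀ ℕ} {S : Set (Fin n →₀ ℕ)}
    (hS : e +ᵥ S ⊆ S) :
    (1 - monomial e 1) * indicatorSeries n S = indicatorSeries n (S \ (e +ᵥ S)) := by
  rw [sub_mul, one_mul, monomial_one_mul_indicatorSeries]
  ext w
  simp only [map_sub, coeff_indicatorSeries, Set.indicator_sdiff hS, Pi.sub_apply]

end IndicatorSeries

section SimplicialCone

variable {n d : ℕ} (v : Fin d → (Fin n → ℕ))

lemma coneR_eq_truncatedCone_empty : coneR v = truncatedCone (fun i j => (v i j : ℝ)) ∅ := by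
  ext y
  simp [coneR, truncatedCone]

lemma fundPar_eq_truncatedCone_univ : fundPar v = truncatedCone (fun i j => (v i j : ℝ)) univ := by
  ext y
  simp [fundPar, truncatedCone]

variable {v}

lemma one_sub_monomial_mul_indicatorSeries_truncatedCone
    (hv : LinearIndependent ℝ (fun i j => (v i j : ℝ))) {s : Finset (Fin d)} {k : Fin d}
    (hk : k ∉ s) :
    (1 - monomial (Finsupp.equivFunOnFinite.symm (v k)) 1) *
        indicatorSeries n {w | (fun j => (w j : ℝ)) ∈ truncatedCone (fun i j => (v i j : ℝ)) s} =
      indicatorSeries n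
        {w | (fun j => (w j : ℝ)) ∈ truncatedCone (fun i j => (v i j : ℝ)) (insert k s)} := by
  have hnonneg := truncatedCone_subset_nonneg (u := fun i j => (v i j : ℝ))
    (fun i => Pi.le_def.mpr fun j => Nat.cast_nonneg (v i j)) s
  rw [one_sub_monomial_mul_indicatorSeries, vadd_setOf_natCast_mem hnonneg,
    truncatedCone_insert hv hk]
  · rfl
  · rw [vadd_setOf_natCast_mem hnonneg]
    intro w hw
    simpa using add_mem_truncatedCone hk hw

lemma prod_one_sub_monomial_mul_indicatorSeries_coneR
    (hv : LinearIndependent ℝ (fun i j => (v i j : ℝ))) (s : Finset (Fin d)) :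
    (∏ i ∈ s, (1 - monomial (Finsupp.equivFunOnFinite.symm (v i)) 1)) *
        indicatorSeries n {w | (fun j => (w j : ℝ)) ∈ coneR v} =
      indicatorSeries n {w | (fun j => (w j : ℝ)) ∈ truncatedCone (fun i j => (v i j : ℝ)) s} := by
  induction s using Finset.induction_on with
  | empty => rw [prod_empty, one_mul, coneR_eq_truncatedCone_empty]
  | insert k s hk ih =>
    rw [prod_insert hk, mul_assoc, ih, one_sub_monomial_mul_indicatorSeries_truncatedCone hv hk]

end SimplicialCone

/-- The rational function identity for a simplicial cone: the generating function `φ` of the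
integer points of the real cone generated by linearly independent nonnegative integer vectors
satisfies `(1 - X^{v 1})·…·(1 - X^{v d}) · φ = Σ_{w ∈ ℤ^n ∩ Π(v)} X^w`. -/
theorem simplicial_cone_generating_function
    (n d : ℕ) (v : Fin d → (Fin n → ℕ))
    (hli : LinearIndependent ℚ (fun i => fun j => (v i j : ℚ))) :
    (∏ i, (1 - MvPowerSeries.monomial (R := ℚ) (Finsupp.equivFunOnFinite.symm (v i)) 1)) *
        indicatorSeries n {w | (fun j => (w j : ℝ)) ∈ coneR v} =
      indicatorSeries n {w | (fun j => (w j : ℝ)) ∈ fundPar v} := by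
  have hv : LinearIndependent ℝ (fun i j => (v i j : ℝ)) := by
    simpa [Function.comp_def] using linearIndependent_algebraMap_comp_iff (S := ℝ).mpr hli
  rw [fundPar_eq_truncatedCone_univ]
  exact prod_one_sub_monomial_mul_indicatorSeries_coneR hv univ
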